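/- arXiv:1708.02089 — 2 statements merged into one kernel-verified Lean document; each statement's English description precedes it below -/
import Mathlib

section
/- Let L be a nonzero lattice (a finitely generated free abelian group with L ≠ {0}) and let L' = l₀ + L₀ ⊆ L be a full affine sublattice, i.e. a coset of a subgroup L₀ ⊆ L of finite index. Then the set of divisibilities div(L') = { div(l) | l ∈ L' } ⊆ ℕ is infinite. -/
/-!
Pick a nonzero `c` in the coset `l₀ + L₀` and let `n` be the index of `L₀`. Since `n • L ⊆ L₀`,
every multiple `(1 + k n) • c` lies in the coset again, and its divisibility is at least `1 + k n`.
Divisibilities of nonzero elements are finite (bounded by any nonzero coordinate in a basis),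
so these values are unbounded.
-/

/-- The divisibility of an element `x` of a lattice (finitely generated free abelian
group) `L`: the largest natural number `d` such that `x = d • x₀` for some `x₀ ∈ L`
(and `0` for `x = 0`, since then the set of such `d` is unbounded and `sSup` gives `0`). -/
noncomputable def divis {L : Type*} [AddCommGroup L] (x : L) : ℕ :=
  sSup {d : ℕ | ∃ y : L, x = d • y}

section Divisibility

variable {L : Type*} [AddCommGroup L]

lemma bddAbove_nsmul_divisors [Module.Free ℤ L] {x : L} (hx : x ≠ 0) :
    BddAbove {d : ℕ | ∃ y : L, x = d • y} := by
  let b := Module.Free.chooseBasis ℤ L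
  obtain ⟨i, hi⟩ : ∃ i, b.repr x i ≠ 0 :=
    Finsupp.ne_iff.mp ((map_ne_zero_iff _ b.repr.injective).mpr hx)
  refine ⟨(b.repr x i).natAbs, fun d ⟨y, hy⟩ => ?_⟩
  have hdvd : (d : ℤ) ∣ b.repr x i := ⟨b.repr y i, by simp [hy]⟩
  simpa using Nat.le_of_dvd (Int.natAbs_pos.mpr hi) (Int.natAbs_dvd_natAbs.mpr hdvd)

lemma le_divis_nsmul [Module.Free ℤ L] {m : ℕ} {c : L} (h : m • c ≠ 0) : m ≤ divis (m • c) :=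
  le_csSup (bddAbove_nsmul_divisors h) ⟨c, rfl⟩

lemma AddSubgroup.exists_ne_zero_sub_mem [Nontrivial L] [IsAddTorsionFree L]
    {L₀ : AddSubgroup L} (hfull : L₀.index ≠ 0) (l₀ : L) : ∃ c ≠ 0, c - l₀ ∈ L₀ := by
  by_cases h0 : l₀ = 0
  · obtain ⟨x, hx⟩ := exists_ne (0 : L)
    exact ⟨L₀.index • x, smul_ne_zero hfull hx, by simpa [h0] using L₀.nsmul_index_mem x⟩
  · exact ⟨l₀, h0, by simp⟩

end Divisibility

theorem divis_coset_infinite_general {L : Type*}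
    [AddCommGroup L] [Module.Free ℤ L] [Nontrivial L]
    (L₀ : AddSubgroup L) (hfull : L₀.index ≠ 0) (l₀ : L) :
    {d : ℕ | ∃ y ∈ L₀, d = divis (l₀ + y)}.Infinite := by
  have := IsAddTorsionFree.of_isTorsionFree ℤ L
  obtain ⟨c, hc, hcl₀⟩ := L₀.exists_ne_zero_sub_mem hfull l₀
  refine Set.infinite_of_not_bddAbove fun ⟨N, hN⟩ => ?_
  set m := 1 + N * L₀.index
  have hm : m • c - l₀ ∈ L₀ := by
    have hmul : (N * L₀.index) • c ∈ L₀ := by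
      rw [mul_comm, mul_smul]
      exact L₀.nsmul_index_mem _
    simpa [m, add_smul, add_sub_right_comm] using L₀.add_mem hcl₀ hmul
  have hmN : m ≤ N := calc
    m ≤ divis (m • c) := le_divis_nsmul (smul_ne_zero (by omega) hc)
    _ = divis (l₀ + (m • c - l₀)) := by rw [add_sub_cancel]
    _ ≤ N := hN ⟨_, hm, rfl⟩
  have : N ≤ N * L₀.index := Nat.le_mul_of_pos_right N (Nat.pos_of_ne_zero hfull)
  omega

/-- If `L ≠ {0}` is a nonzero lattice and `L' = l₀ + L₀ ⊆ L` is a full affine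
sublattice (a coset of a finite-index subgroup `L₀ ⊆ L`), then the set of
divisibilities `div(L') = {div l | l ∈ L'}` is infinite. -/
theorem divis_coset_infinite {L : Type*}
    [AddCommGroup L] [Module.Free ℤ L] [Module.Finite ℤ L] [Nontrivial L]
    (L₀ : AddSubgroup L) (hfull : L₀.index ≠ 0) (l₀ : L) :
    {d : ℕ | ∃ y ∈ L₀, d = divis (l₀ + y)}.Infinite :=
  divis_coset_infinite_general L₀ hfull l₀
end

section
/- Let L be a nonzero lattice (a finitely generated free abelian group with L ≠ {0}), let L₀ ⊆ L be a subgroup of finite index, and let l₀ ∈ L. Then for every prime p that is coprime to the index [L : L₀], the coset L' = l₀ + L₀ contains an element l whose divisibility div(l) in L is divisible by p (in particular an element of pL); consequently p ≤ sup div(L'). -/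
section Coset

variable {G : Type*} [AddCommGroup G] (H : AddSubgroup G) {p : ℕ}

theorem AddSubgroup.exists_nsmul_sub_mem_of_coprime_index (hcop : p.Coprime H.index) (g : G) :
    ∃ m : G, p • m - g ∈ H := by
  obtain ⟨a, b, hab⟩ := hcop.isCoprime
  refine ⟨a • g, ?_⟩
  have hsub : p • a • g - g = (-b) • H.index • g := by
    linear_combination (norm := module) hab • g
  rw [hsub]
  exact H.zsmul_mem (H.nsmul_index_mem g) _

theorem AddSubgroup.exists_nsmul_ne_zero_sub_mem_of_coprime_index [IsAddTorsionFree G]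
    [Nontrivial G] (hp : 1 < p) (hcop : p.Coprime H.index) (g : G) :
    ∃ m : G, p • m ≠ 0 ∧ p • m - g ∈ H := by
  obtain ⟨m, hm⟩ := H.exists_nsmul_sub_mem_of_coprime_index hcop g
  by_cases hm0 : p • m = 0
  · obtain ⟨x, hx⟩ := exists_ne (0 : G)
    have hindex : H.index ≠ 0 := by
      rintro h
      rw [h, Nat.coprime_zero_right] at hcop
      omega
    refine ⟨m + H.index • x, ?_, ?_⟩
    · rw [smul_add, hm0, zero_add, smul_smul]
      exact smul_ne_zero (by positivity) hx
    · rw [smul_add, add_sub_right_comm]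
      exact H.add_mem hm (H.nsmul_mem (H.nsmul_index_mem x) p)
  · exact ⟨m, hm0, hm⟩

end Coset

section Divisibility

variable {L : Type*} [AddCommGroup L]

theorem exists_eq_mul_nsmul_of_coprime {x m y : L} {n d : ℕ} (hcop : n.Coprime d)
    (hm : x = n • m) (hy : x = d • y) : ∃ z : L, x = (n * d) • z := by
  obtain ⟨a, b, hab⟩ := hcop.isCoprime
  refine ⟨a • y + b • m, ?_⟩
  linear_combination (norm := module) (a * n) • hy + (b * d) • hm - hab • x

variable [Module.Free ℤ L] {x : L}

theorem bddAbove_setOf_eq_nsmul (hx : x ≠ 0) : BddAbove {d : ℕ | ∃ y : L, x = d • y} := by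
  let b := Module.Free.chooseBasis ℤ L
  obtain ⟨i, hi⟩ : ∃ i, b.repr x i ≠ 0 := by
    by_contra! h
    exact hx (b.repr.map_eq_zero_iff.mp (Finsupp.ext h))
  refine ⟨(b.repr x i).natAbs, fun d hd => ?_⟩
  obtain ⟨y, hy⟩ := hd
  have hdvd : (d : ℤ) ∣ b.repr x i := ⟨b.repr y i, by simp [hy]⟩
  exact Nat.le_of_dvd (Int.natAbs_pos.mpr hi) (Int.natAbs_dvd_natAbs.mpr hdvd)

theorem le_divis (hx : x ≠ 0) {n : ℕ} {m : L} (hm : x = n • m) : n ≤ divis x :=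
  le_csSup (bddAbove_setOf_eq_nsmul hx) ⟨m, hm⟩

theorem exists_eq_divis_nsmul (hx : x ≠ 0) : ∃ y : L, x = divis x • y :=
  Nat.sSup_mem (s := {d : ℕ | ∃ y : L, x = d • y}) ⟨1, x, (one_smul ℕ x).symm⟩
    (bddAbove_setOf_eq_nsmul hx)

theorem Nat.Prime.dvd_divis {p : ℕ} (hp : p.Prime) (hx : x ≠ 0) {m : L} (hm : x = p • m) :
    p ∣ divis x := by
  by_contra hndvd
  obtain ⟨y, hy⟩ := exists_eq_divis_nsmul hx
  have hd : 0 < divis x := Nat.pos_of_ne_zero fun h => hx (by rw [hy, h, zero_smul])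
  obtain ⟨z, hz⟩ :=
    exists_eq_mul_nsmul_of_coprime ((hp.coprime_iff_not_dvd).mpr hndvd) hm hy
  have hle : p * divis x ≤ divis x := le_divis hx hz
  nlinarith [hp.two_le]

end Divisibility

theorem exists_coset_elem_divis_dvd_general {L : Type*}
    [AddCommGroup L] [Module.Free ℤ L] [Nontrivial L]
    (L₀ : AddSubgroup L) (l₀ : L)
    (p : ℕ) (hp : p.Prime) (hcop : Nat.Coprime p L₀.index) :
    (∃ l : L, l - l₀ ∈ L₀ ∧ (∃ m : L, l = p • m) ∧ p ∣ divis l) ∧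
    (∃ l : L, l - l₀ ∈ L₀ ∧ p ≤ divis l) := by
  have : IsAddTorsionFree L := .of_isTorsionFree ℤ L
  obtain ⟨m, hm0, hmem⟩ :=
    L₀.exists_nsmul_ne_zero_sub_mem_of_coprime_index hp.one_lt hcop l₀
  exact ⟨⟨p • m, hmem, ⟨m, rfl⟩, hp.dvd_divis hm0 rfl⟩, ⟨p • m, hmem, le_divis hm0 rfl⟩⟩

/-- Let `L ≠ {0}` be a nonzero lattice, `L₀ ⊆ L` a subgroup of finite index and
`l₀ ∈ L`.  For every prime `p` coprime to the index `[L : L₀]`, the coset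
`L' = l₀ + L₀` contains an element `l ∈ pL` whose divisibility is divisible by `p`;
consequently `p ≤ sup div(L')`: the coset contains an element `l` with `p ≤ div l`. -/
theorem exists_coset_elem_divis_dvd {L : Type*}
    [AddCommGroup L] [Module.Free ℤ L] [Module.Finite ℤ L] [Nontrivial L]
    (L₀ : AddSubgroup L) (hfull : L₀.index ≠ 0) (l₀ : L)
    (p : ℕ) (hp : p.Prime) (hcop : Nat.Coprime p L₀.index) :
    (∃ l : L, l - l₀ ∈ L₀ ∧ (∃ m : L, l = p • m) ∧ p ∣ divis l) ∧
    (∃ l : L, l - l₀ ∈ L₀ ∧ p ≤ divis l) :=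
  exists_coset_elem_divis_dvd_general L₀ l₀ p hp hcop
end
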